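/- For the singularly perturbed problem -ε u'' + u' = eˣ with 0 < ε ≤ 1/2 and exact solution u as given, u attains values close to eˣ - 1 away from x = 1: for every x ∈ [0,1], |u(x) - (eˣ - 1) + (e-1)exp((x-1)/ε)·c_ε| ≤ C ε for constants c_ε = 1/((1-ε)(1-exp(-1/ε))) and some C independent of ε. In particular |u(x)| ≤ e for all x ∈ [0,1] and all 0 < ε ≤ 1/2. -/
import Mathlib

lemma aux_q_le_eps (ε : ℝ) (hε : 0 < ε) :
    Real.exp (-1/ε) ≤ ε := by
  have h1 : 1/ε + 1 ≤ Real.exp (1/ε) := Real.add_one_le_exp _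
  have h2 : Real.exp (-1/ε) * Real.exp (1/ε) = 1 := by
    rw [← Real.exp_add, neg_div, neg_add_cancel, Real.exp_zero]
  have h5 : ε * (1/ε) = 1 := by field_simp
  nlinarith [mul_le_mul_of_nonneg_left h1 hε.le, Real.exp_pos (1/ε),
    Real.exp_pos (-1/ε)]

lemma aux_q_le_7 (ε : ℝ) (hε : 0 < ε) (hε2 : ε ≤ 1/2) :
    Real.exp (-1/ε) ≤ 1/7 := by
  have h0 : -1/ε ≤ -2 := by
    rw [div_le_iff₀ hε] at *; nlinarith
  have h1 : Real.exp (-1/ε) ≤ Real.exp (-2) := Real.exp_le_exp.2 h0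
  have h2 : Real.exp (-2) * Real.exp 2 = 1 := by rw [← Real.exp_add]; norm_num
  have h4 : Real.exp 2 = Real.exp 1 * Real.exp 1 := by rw [← Real.exp_add]; norm_num
  have h3 : (7:ℝ) ≤ Real.exp 2 := by nlinarith [Real.exp_one_gt_d9]
  nlinarith [Real.exp_pos (-2)]

set_option maxHeartbeats 1000000 in
theorem exact_solution_uniform_bounds :
    (∃ C : ℝ, ∀ ε : ℝ, 0 < ε → ε ≤ 1 / 2 → ∀ x ∈ Set.Icc (0:ℝ) 1,
      |(1 / (1 - ε)) * (Real.exp x -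
          (1 - Real.exp (1 - 1 / ε) + (Real.exp 1 - 1) * Real.exp ((x - 1) / ε))
            / (1 - Real.exp (-1 / ε)))
        - (Real.exp x - 1)
        + (Real.exp 1 - 1) * Real.exp ((x - 1) / ε) *
            (1 / ((1 - ε) * (1 - Real.exp (-1 / ε))))| ≤ C * ε) ∧
    (∀ ε : ℝ, 0 < ε → ε ≤ 1 / 2 → ∀ x ∈ Set.Icc (0:ℝ) 1,
      |(1 / (1 - ε)) * (Real.exp x -
          (1 - Real.exp (1 - 1 / ε) + (Real.exp 1 - 1) * Real.exp ((x - 1) / ε))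
            / (1 - Real.exp (-1 / ε)))| ≤ Real.exp 1) := by
  constructor
  · -- first part, with C = 100
    refine ⟨100, ?_⟩
    intro ε hε hε2 x hx
    obtain ⟨hx0, hx1⟩ := hx
    have hqε : Real.exp (-1/ε) ≤ ε := aux_q_le_eps ε hε
    have hq7 : Real.exp (-1/ε) ≤ 1/7 := aux_q_le_7 ε hε hε2
    have hq0 : 0 < Real.exp (-1/ε) := Real.exp_pos _
    have hD : 0 < 1 - Real.exp (-1/ε) := by linarith
    have h1ε : (0:ℝ) < 1 - ε := by linarith
    have he1 : 2.7182818283 < Real.exp 1 := Real.exp_one_gt_d9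
    have he2 : Real.exp 1 < 2.7182818286 := Real.exp_one_lt_d9
    have he0 : (0:ℝ) < Real.exp 1 := Real.exp_pos _
    have hexp11 : Real.exp (1 - 1/ε) = Real.exp 1 * Real.exp (-1/ε) := by
      rw [← Real.exp_add]; ring_nf
    have hX0 : 0 < Real.exp x := Real.exp_pos _
    have hXb : Real.exp x ≤ Real.exp 1 := Real.exp_le_exp.2 hx1
    have ht0 : 0 < Real.exp ((x-1)/ε) := Real.exp_pos _
    set q := Real.exp (-1/ε)
    set t := Real.exp ((x-1)/ε)
    set X := Real.exp x
    set e' := Real.exp 1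
    clear_value q t X e'
    rw [hexp11]
    have hexpr : (1/(1-ε)) * (X - (1 - e'*q + (e'-1)*t)/(1-q)) - (X - 1)
          + (e'-1)*t*(1/((1-ε)*(1-q)))
        = (ε*X*(1-q) + (q*(e'-1+ε) - ε)) / ((1-ε)*(1-q)) := by
      field_simp
      ring
    rw [hexpr, abs_div, abs_of_pos (by positivity : (0:ℝ) < (1-ε)*(1-q)),
      div_le_iff₀ (by positivity : (0:ℝ) < (1-ε)*(1-q))]
    have hd1 : (3:ℝ)/7 ≤ (1-ε)*(1-q) := by nlinarith
    have hd2 : (100*ε)*(3/7) ≤ (100*ε)*((1-ε)*(1-q)) :=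
      mul_le_mul_of_nonneg_left hd1 (by positivity)
    have hεX : ε*X*(1-q) ≤ 3*ε := by
      nlinarith [mul_le_mul_of_nonneg_left hXb hε.le,
        mul_nonneg (mul_nonneg hε.le hX0.le) hq0.le]
    have hεX0 : 0 ≤ ε*X*(1-q) := by positivity
    have hqb : q*(e'-1+ε) ≤ 3*ε := by
      nlinarith [mul_le_mul_of_nonneg_right hqε (by linarith : (0:ℝ) ≤ e'-1+ε)]
    have hqb0 : 0 ≤ q*(e'-1+ε) := mul_nonneg hq0.le (by linarith)
    rw [abs_le]
    constructor
    · linarith only [hεX0, hqb0, hd2, hε]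
    · linarith only [hεX, hqb, hd2, hε]
  · -- second part: uniform bound by e
    intro ε hε hε2 x hx
    obtain ⟨hx0, hx1⟩ := hx
    have hqε : Real.exp (-1/ε) ≤ ε := aux_q_le_eps ε hε
    have hq7 : Real.exp (-1/ε) ≤ 1/7 := aux_q_le_7 ε hε hε2
    have hq0 : 0 < Real.exp (-1/ε) := Real.exp_pos _
    have hD : 0 < 1 - Real.exp (-1/ε) := by linarith
    have h1ε : (0:ℝ) < 1 - ε := by linarith
    have he1 : 2.7182818283 < Real.exp 1 := Real.exp_one_gt_d9
    have he2 : Real.exp 1 < 2.7182818286 := Real.exp_one_lt_d9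
    have he0 : (0:ℝ) < Real.exp 1 := Real.exp_pos _
    have hexp11 : Real.exp (1 - 1/ε) = Real.exp 1 * Real.exp (-1/ε) := by
      rw [← Real.exp_add]; ring_nf
    have hX : Real.exp x = Real.exp 1 * Real.exp (x-1) := by
      rw [← Real.exp_add]; ring_nf
    have ht1 : Real.exp ((x-1)/ε) ≤ 1 := by
      rw [Real.exp_le_one_iff]
      apply div_nonpos_of_nonpos_of_nonneg <;> linarith
    have ht0 : 0 < Real.exp ((x-1)/ε) := Real.exp_pos _
    have hts : Real.exp ((x-1)/ε) ≤ Real.exp (x-1) := by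
      apply Real.exp_le_exp.2
      rw [div_le_iff₀ hε]
      nlinarith
    have hs1 : Real.exp (x-1) ≤ 1 := by rw [Real.exp_le_one_iff]; linarith
    have hs0 : 0 < Real.exp (x-1) := Real.exp_pos _
    have hY : Real.exp (x-1) ≤ ε * Real.exp ((x-1)/ε) + (1 - ε) := by
      have h := convexOn_exp.2 (Set.mem_univ ((x-1)/ε)) (Set.mem_univ (0:ℝ))
        hε.le h1ε.le (by ring)
      simp only [smul_eq_mul, mul_zero, add_zero, Real.exp_zero, mul_one] at h
      have hxe : ε * ((x-1)/ε) = x - 1 := by field_simp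
      rw [hxe] at h
      exact h
    set q := Real.exp (-1/ε)
    set t := Real.exp ((x-1)/ε)
    set s := Real.exp (x-1)
    set e' := Real.exp 1
    clear_value q t s e'
    rw [hexp11, hX]
    have hexpr : (1/(1-ε)) * (e' * s - (1 - e'*q + (e'-1)*t)/(1-q))
        = (e'*s*(1-q) - (1 - e'*q + (e'-1)*t)) / ((1-ε)*(1-q)) := by
      field_simp
    rw [hexpr, abs_div, abs_of_pos (by positivity : (0:ℝ) < (1-ε)*(1-q)),
      div_le_iff₀ (by positivity : (0:ℝ) < (1-ε)*(1-q))]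
    have h6 : s - t ≤ (1-ε) * (1-t) := by nlinarith
    have heq : 0 ≤ e'*q := by positivity
    have heq1 : e'*q ≤ 0.39 := by
      nlinarith [mul_le_mul he2.le hq7 hq0.le (by norm_num : (0:ℝ) ≤ 2.7182818286)]
    have hd1 : (3:ℝ)/7 ≤ (1-ε)*(1-q) := by nlinarith
    have hd2 : (1:ℝ) ≤ e'*((1-ε)*(1-q)) := by nlinarith
    rw [abs_le]
    constructor
    · have hA : 0 ≤ e' * (1-q) * (s - t) := by
        apply mul_nonneg (by positivity)
        linarith
      have hB : (1 - e'*q) * (1 - t) ≤ 1 := by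
        nlinarith [mul_le_mul_of_nonneg_left ht1 heq, ht0]
      linarith only [hA, hB, hd2]
    · have hA : (e' * (1-q)) * (s - t) ≤ (e' * (1-q)) * ((1-ε)*(1-t)) := by
        apply mul_le_mul_of_nonneg_left h6 (by positivity)
      have hB : 0 ≤ (1 - e'*q) * (1 - t) := by
        apply mul_nonneg <;> linarith
      have hC : 0 ≤ e'*(1-q)*((1-ε)*t) := by positivity
      linarith only [hA, hB, hC]
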